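/- Let P be a set of points on the future light cone ℒ³₊ ⊂ ℝ^{1,3} such that the associated horoballs {B_y : y ∈ P} are pairwise disjoint. Then for every h > 0 the set {p ∈ P : p₀ ≤ h} is finite; in particular P is discrete. -/

import Mathlib

/-!
Two light-cone points `y, y'` with `⟨y, y'⟩ ≥ -2` have intersecting horoballs: an explicit
point of both is built from `y + y'`. Disjointness therefore forces `⟨y, y'⟩ < -2`, i.e.
`⟨y - y', y - y'⟩ > 4`, so distinct points of `P` are uniformly separated. On the cone the
sup norm equals the time coordinate, so `{p ∈ P | p₀ ≤ h}` is a bounded, uniformly separated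
subset of `ℝ⁴`, hence finite.
-/

/-- The Minkowski bilinear form on ℝ^{1,3}. -/
def mink3 (x y : Fin 4 → ℝ) : ℝ :=
  -(x 0 * y 0) + x 1 * y 1 + x 2 * y 2 + x 3 * y 3

/-- The horoball associated to a point of the future light cone. -/
def horoball (y : Fin 4 → ℝ) : Set (Fin 4 → ℝ) :=
  {x | mink3 x x = -1 ∧ 0 < x 0 ∧ mink3 x y ≥ -1}

open Metric in
theorem Set.Finite.of_isBounded_of_pairwise_lt_dist {X : Type*} [MetricSpace X] [ProperSpace X]
    {s : Set X} {ε : ℝ} (hε : 0 < ε) (hs : Bornology.IsBounded s)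
    (hsep : s.Pairwise fun x y ↦ ε < dist x y) : s.Finite := by
  by_contra hinf
  obtain ⟨x, -, hx⟩ := Set.Infinite.exists_accPt_cofinite_inf_principal_of_subset_isCompact
    hinf hs.isCompact_closure subset_closure
  have hball : (ball x (ε / 2) ∩ s).Infinite := fun hfin ↦ by
    obtain ⟨p, hp, hpc, hps⟩ := hx.nonempty_of_mem <| Filter.inter_mem_inf
      (mem_nhdsWithin_of_mem_nhds (ball_mem_nhds x (half_pos hε)))
      (Filter.inter_mem_inf hfin.compl_mem_cofinite (Filter.mem_principal_self s))
    exact hpc ⟨hp, hps⟩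
  obtain ⟨p, hp, q, hq, hpq⟩ := hball.nontrivial
  have hfar := hsep hp.2 hq.2 hpq
  have htri := dist_triangle_right p q x
  linarith [mem_ball.1 hp.1, mem_ball.1 hq.1]

theorem mink3_comm (x y : Fin 4 → ℝ) : mink3 x y = mink3 y x := by
  simp only [mink3]; ring

theorem mink3_add_left (x y z : Fin 4 → ℝ) : mink3 (x + y) z = mink3 x z + mink3 y z := by
  simp only [mink3, Pi.add_apply]; ring

theorem mink3_smul_left (c : ℝ) (x y : Fin 4 → ℝ) : mink3 (c • x) y = c * mink3 x y := by
  simp only [mink3, Pi.smul_apply, smul_eq_mul]; ring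

theorem mink3_add_right (x y z : Fin 4 → ℝ) : mink3 x (y + z) = mink3 x y + mink3 x z := by
  rw [mink3_comm, mink3_add_left, mink3_comm y, mink3_comm z]

theorem mink3_smul_right (c : ℝ) (x y : Fin 4 → ℝ) : mink3 x (c • y) = c * mink3 x y := by
  rw [mink3_comm, mink3_smul_left, mink3_comm]

theorem mink3_single_zero_left (y : Fin 4 → ℝ) : mink3 (Pi.single 0 1) y = -y 0 := by
  simp [mink3]

def futureLightCone : Set (Fin 4 → ℝ) := {y | mink3 y y = 0 ∧ 0 < y 0}

section FutureLightCone

variable {y y' : Fin 4 → ℝ}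

/- Reverse Cauchy–Schwarz: `|ȳ · ȳ'| ≤ |ȳ| |ȳ'| = y₀ y'₀` for the spatial parts `ȳ, ȳ'`,
via Lagrange's identity. -/
theorem mink3_nonpos_of_mem_futureLightCone (hy : y ∈ futureLightCone)
    (hy' : y' ∈ futureLightCone) : mink3 y y' ≤ 0 := by
  obtain ⟨hy, h0⟩ := hy
  obtain ⟨hy', h0'⟩ := hy'
  simp only [mink3] at *
  nlinarith [sq_nonneg (y 1 * y' 2 - y 2 * y' 1), sq_nonneg (y 1 * y' 3 - y 3 * y' 1),
    sq_nonneg (y 2 * y' 3 - y 3 * y' 2),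
    sq_nonneg (y 1 * y' 1 + y 2 * y' 2 + y 3 * y' 3 - y 0 * y' 0), mul_pos h0 h0']

theorem norm_eq_of_mem_futureLightCone (hy : y ∈ futureLightCone) : ‖y‖ = y 0 := by
  obtain ⟨hy, h0⟩ := hy
  refine le_antisymm ((pi_norm_le_iff_of_nonneg h0.le).2 fun i ↦ ?_) ?_
  · simp only [mink3] at hy
    rw [Real.norm_eq_abs]
    refine abs_le_of_sq_le_sq ?_ h0.le
    fin_cases i <;>
      simp only [Fin.isValue, Fin.zero_eta, Fin.mk_one, Fin.reduceFinMk] <;> nlinarith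
  · simpa [abs_of_pos h0] using norm_le_pi_norm y 0

/- For `⟨y, y'⟩ < 0` the sum `y + y'` is future timelike; normalised, it pairs with `y` and
with `y'` to `-√(-⟨y, y'⟩ / 2) ≥ -1`. -/
theorem inv_sqrt_smul_add_mem_horoball (hy : y ∈ futureLightCone) (hy' : y' ∈ futureLightCone)
    (hneg : mink3 y y' < 0) (hge : -2 ≤ mink3 y y') :
    (√(-2 * mink3 y y'))⁻¹ • (y + y') ∈ horoball y := by
  obtain ⟨hyy, h0⟩ := hy
  obtain ⟨hyy', h0'⟩ := hy'
  have hs : 0 < √(-2 * mink3 y y') := Real.sqrt_pos.2 (by linarith)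
  have hs2 : √(-2 * mink3 y y') ^ 2 = -2 * mink3 y y' := Real.sq_sqrt (by linarith)
  simp only [horoball, Set.mem_ofPred_eq, mink3_smul_left, mink3_smul_right, mink3_add_left,
    mink3_add_right, hyy, hyy', mink3_comm y' y, Pi.smul_apply, Pi.add_apply, smul_eq_mul]
  generalize √(-2 * mink3 y y') = s at *
  refine ⟨?_, by positivity, ?_⟩
  · field_simp
    linear_combination hs2
  · rw [ge_iff_le, ← div_eq_inv_mul, le_div_iff₀ hs]
    nlinarith

/- For `⟨y, y'⟩ = 0` the sum `y + y'` is null, so it is tilted towards `e₀ = Pi.single 0 1`.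
With `v = y₀ + y'₀` the coefficients make the result a unit timelike vector, and it pairs with
`y` to `-y₀ / v ≥ -1`. -/
theorem smul_add_add_smul_single_mem_horoball (hy : y ∈ futureLightCone)
    (hy' : y' ∈ futureLightCone) (hzero : mink3 y y' = 0) :
    ((1 - (y 0 + y' 0)⁻¹ ^ 2) / 2) • (y + y') + (y 0 + y' 0)⁻¹ • Pi.single 0 1 ∈
      horoball y := by
  obtain ⟨hyy, h0⟩ := hy
  obtain ⟨hyy', h0'⟩ := hy'
  simp only [horoball, Set.mem_ofPred_eq, mink3_smul_left, mink3_smul_right, mink3_add_left,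
    mink3_add_right, hyy, hyy', mink3_comm y' y, mink3_comm _ (Pi.single 0 1),
    mink3_single_zero_left, hzero, Pi.smul_apply, Pi.add_apply, smul_eq_mul, Pi.single_eq_same]
  have hv : 0 < y 0 + y' 0 := by positivity
  generalize hv_def : y 0 + y' 0 = v at *
  refine ⟨?_, ?_, ?_⟩
  · field_simp
    linear_combination (4 * v - 4 * v ^ 3) * hv_def
  · field_simp
    nlinarith
  · field_simp
    nlinarith

theorem horoball_inter_nonempty (hy : y ∈ futureLightCone) (hy' : y' ∈ futureLightCone)
    (hge : -2 ≤ mink3 y y') : (horoball y ∩ horoball y').Nonempty := by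
  have hge' : -2 ≤ mink3 y' y := mink3_comm y y' ▸ hge
  rcases (mink3_nonpos_of_mem_futureLightCone hy hy').lt_or_eq with hneg | hzero
  · have hneg' : mink3 y' y < 0 := mink3_comm y y' ▸ hneg
    refine ⟨_, inv_sqrt_smul_add_mem_horoball hy hy' hneg hge, ?_⟩
    simpa only [mink3_comm y', add_comm y'] using inv_sqrt_smul_add_mem_horoball hy' hy hneg' hge'
  · have hzero' : mink3 y' y = 0 := mink3_comm y y' ▸ hzero
    refine ⟨_, smul_add_add_smul_single_mem_horoball hy hy' hzero, ?_⟩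
    simpa only [add_comm y', add_comm (y' 0)] using
      smul_add_add_smul_single_mem_horoball hy' hy hzero'

theorem mink3_lt_neg_two_of_disjoint (hy : y ∈ futureLightCone) (hy' : y' ∈ futureLightCone)
    (hdisj : Disjoint (horoball y) (horoball y')) : mink3 y y' < -2 := by
  by_contra! hge
  exact Set.not_disjoint_iff_nonempty_inter.2 (horoball_inter_nonempty hy hy' hge) hdisj

/- `⟨y - y', y - y'⟩ = -2⟨y, y'⟩ > 4`, so the spatial parts of `y` and `y'` are more than
`2` apart, which three coordinate gaps of at most `1` cannot achieve. -/
theorem one_lt_dist_of_mink3_lt_neg_two (hy : mink3 y y = 0) (hy' : mink3 y' y' = 0)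
    (h : mink3 y y' < -2) : 1 < dist y y' := by
  by_contra! hle
  have hsq : ∀ i, (y i - y' i) ^ 2 ≤ 1 := fun i ↦ by
    rw [sq_le_one_iff_abs_le_one, ← Real.dist_eq]
    exact (dist_le_pi_dist y y' i).trans hle
  simp only [mink3] at hy hy' h
  nlinarith [hsq 1, hsq 2, hsq 3, sq_nonneg (y 0 - y' 0)]

end FutureLightCone

/-- If the horoballs associated to a family P of light-cone points are pairwise
disjoint, then the part of P with bounded first coordinate is finite; in
particular P is discrete. -/
theorem stmt_12 (P : Set (Fin 4 → ℝ))
    (hP : ∀ y ∈ P, mink3 y y = 0 ∧ 0 < y 0)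
    (hdisj : ∀ y ∈ P, ∀ y' ∈ P, y ≠ y' → Disjoint (horoball y) (horoball y')) :
    ∀ h : ℝ, 0 < h → {p ∈ P | p 0 ≤ h}.Finite := by
  intro h _
  refine Set.Finite.of_isBounded_of_pairwise_lt_dist one_pos ?_ ?_
  · refine isBounded_iff_forall_norm_le.2 ⟨h, fun p hp ↦ ?_⟩
    rw [norm_eq_of_mem_futureLightCone (hP p hp.1)]
    exact hp.2
  · intro p hp p' hp' hne
    exact one_lt_dist_of_mink3_lt_neg_two (hP p hp.1).1 (hP p' hp'.1).1 <|
      mink3_lt_neg_two_of_disjoint (hP p hp.1) (hP p' hp'.1) (hdisj p hp.1 p' hp'.1 hne)
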